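/- arXiv:1211.5125 — 5 statements merged into one kernel-verified Lean document; each statement's English description precedes it below -/
import Mathlib

section
/- Let X be a set with two extended metrics d and d' that are Möbius equivalent (they induce the same cross-ratio triples on admissible quadruples) and share the same infinitely remote point ω (d(x,ω) = ∞ = d'(x,ω) for all x ≠ ω). Then d and d' are homothetic on X \ {ω}: there exists λ > 0 such that d'(x,y) = λ d(x,y) for all x, y ∈ X \ {ω}. -/
/-- Projective equality of triples of reals, i.e. equality in `ℝP²`. -/
def ProjEq (a b : ℝ × ℝ × ℝ) : Prop :=
  ∃ c : ℝ, 0 < c ∧ b.1 = c * a.1 ∧ b.2.1 = c * a.2.1 ∧ b.2.2 = c * a.2.2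

/-- A quadruple is admissible if no entry occurs three or four times. -/
def Admissible {X : Type*} (x y z u : X) : Prop :=
  ¬ ((x = y ∧ y = z) ∨ (x = y ∧ y = u) ∨ (x = z ∧ z = u) ∨ (y = z ∧ z = u))

open scoped Classical in
/-- The cross-ratio triple of a quadruple with respect to an extended metric `d` with
infinitely remote point `ω`, with the standard conventions when `ω` occurs among the
entries: e.g. `crt(x,y,z,ω) = (d(x,y) : d(x,z) : d(y,z))` and `crt(x,y,ω,ω) = (0:1:1)`. -/
noncomputable def crt {X : Type*} (d : X → X → ℝ) (ω x y z u : X) : ℝ × ℝ × ℝ :=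
  if x = ω then
    (if y = ω then ((0 : ℝ), 1, 1) else if z = ω then ((1 : ℝ), 0, 1)
      else if u = ω then ((1 : ℝ), 1, 0) else (d z u, d y u, d y z))
  else if y = ω then
    (if z = ω then ((1 : ℝ), 1, 0) else if u = ω then ((1 : ℝ), 0, 1)
      else (d z u, d x z, d x u))
  else if z = ω then
    (if u = ω then ((0 : ℝ), 1, 1) else (d x y, d y u, d x u))
  else if u = ω then (d x y, d x z, d y z)
  else (d x y * d z u, d x z * d y u, d x u * d y z)

/-!
A quadruple `(x, y, z, ω)` with `x, y, z` finite and `x ≠ y` is admissible even when `z`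
coincides with `x` or `y`, and its cross-ratio triple is `(d x y : d x z : d y z)`.
Möbius equivalence therefore makes `d' / d` constant on any two pairs sharing a point, and
two arbitrary pairs are linked through at most one intermediate pair.
-/

section MoebiusEquivalence

variable {X : Type*} {ω : X} {d d' : X → X → ℝ}

theorem admissible_of_ne_of_ne_infinity {x y z : X} (hxy : x ≠ y) (hz : z ≠ ω) :
    Admissible x y z ω := by
  rintro (⟨h, -⟩ | ⟨h, -⟩ | ⟨-, h⟩ | ⟨-, h⟩)
  exacts [hxy h, hxy h, hz h, hz h]

theorem crt_eq_of_ne_infinity (d : X → X → ℝ) {x y z : X} (hx : x ≠ ω) (hy : y ≠ ω)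
    (hz : z ≠ ω) : crt d ω x y z ω = (d x y, d x z, d y z) := by
  simp [crt, hx, hy, hz]

theorem exists_pos_scale_of_moebius
    (hequiv : ∀ x y z u : X, Admissible x y z u →
      ProjEq (crt d ω x y z u) (crt d' ω x y z u))
    {x y z : X} (hx : x ≠ ω) (hy : y ≠ ω) (hz : z ≠ ω) (hxy : x ≠ y) :
    ∃ c : ℝ, 0 < c ∧ d' x y = c * d x y ∧ d' x z = c * d x z ∧ d' y z = c * d y z := by
  have h := hequiv x y z ω (admissible_of_ne_of_ne_infinity hxy hz)
  rwa [crt_eq_of_ne_infinity d hx hy hz, crt_eq_of_ne_infinity d' hx hy hz] at h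

variable (hd_pos : ∀ x y, x ≠ ω → y ≠ ω → x ≠ y → 0 < d x y)
  (hequiv : ∀ x y z u : X, Admissible x y z u →
    ProjEq (crt d ω x y z u) (crt d' ω x y z u))
include hd_pos hequiv

theorem div_pos_of_moebius {x y : X} (hx : x ≠ ω) (hy : y ≠ ω) (hxy : x ≠ y) :
    0 < d' x y / d x y := by
  obtain ⟨c, hc, hxy', -⟩ := exists_pos_scale_of_moebius hequiv hx hy hx hxy
  rwa [hxy', mul_div_cancel_right₀ _ (hd_pos x y hx hy hxy).ne']

theorem div_eq_div_of_moebius_same_left {x y z : X} (hx : x ≠ ω) (hy : y ≠ ω)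
    (hz : z ≠ ω) (hxy : x ≠ y) (hxz : x ≠ z) : d' x y / d x y = d' x z / d x z := by
  obtain ⟨c, -, hxy', hxz', -⟩ := exists_pos_scale_of_moebius hequiv hx hy hz hxy
  rw [hxy', hxz', mul_div_cancel_right₀ _ (hd_pos x y hx hy hxy).ne',
    mul_div_cancel_right₀ _ (hd_pos x z hx hz hxz).ne']

theorem div_eq_div_of_moebius_consecutive {x y z : X} (hx : x ≠ ω) (hy : y ≠ ω)
    (hz : z ≠ ω) (hxy : x ≠ y) (hyz : y ≠ z) : d' x y / d x y = d' y z / d y z := by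
  obtain ⟨c, -, hxy', -, hyz'⟩ := exists_pos_scale_of_moebius hequiv hx hy hz hxy
  rw [hxy', hyz', mul_div_cancel_right₀ _ (hd_pos x y hx hy hxy).ne',
    mul_div_cancel_right₀ _ (hd_pos y z hy hz hyz).ne']

theorem div_eq_div_of_moebius {x y a b : X} (hx : x ≠ ω) (hy : y ≠ ω) (ha : a ≠ ω)
    (hb : b ≠ ω) (hxy : x ≠ y) (hab : a ≠ b) : d' x y / d x y = d' a b / d a b := by
  rcases eq_or_ne x a with rfl | hxa
  · exact div_eq_div_of_moebius_same_left hd_pos hequiv hx hy hb hxy hab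
  · exact (div_eq_div_of_moebius_same_left hd_pos hequiv hx hy ha hxy hxa).trans
      (div_eq_div_of_moebius_consecutive hd_pos hequiv hx ha hb hxa hab)

end MoebiusEquivalence

theorem moebius_equivalent_same_infinity_homothetic_general
    {X : Type*} (ω : X) (d d' : X → X → ℝ)
    (hd_self : ∀ x, d x x = 0) (hd'_self : ∀ x, d' x x = 0)
    (hd_pos : ∀ x y, x ≠ ω → y ≠ ω → x ≠ y → 0 < d x y)
    (hequiv : ∀ x y z u : X, Admissible x y z u →
      ProjEq (crt d ω x y z u) (crt d' ω x y z u)) :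
    ∃ lam : ℝ, 0 < lam ∧ ∀ x y, x ≠ ω → y ≠ ω → d' x y = lam * d x y := by
  by_cases htwo : ∃ a b : X, a ≠ ω ∧ b ≠ ω ∧ a ≠ b
  · obtain ⟨a, b, ha, hb, hab⟩ := htwo
    refine ⟨d' a b / d a b, div_pos_of_moebius hd_pos hequiv ha hb hab, fun x y hx hy => ?_⟩
    rcases eq_or_ne x y with rfl | hxy
    · rw [hd_self, hd'_self, mul_zero]
    · rw [← div_eq_div_of_moebius hd_pos hequiv hx hy ha hb hxy hab,
        div_mul_cancel₀ _ (hd_pos x y hx hy hxy).ne']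
  · refine ⟨1, one_pos, fun x y hx hy => ?_⟩
    obtain rfl : x = y := by
      by_contra hxy
      exact htwo ⟨x, y, hx, hy, hxy⟩
    rw [hd_self, hd'_self, mul_zero]

/-- two Möbius equivalent extended metrics with the same infinitely remote
point `ω` are homothetic on `X \ {ω}`. -/
theorem moebius_equivalent_same_infinity_homothetic
    {X : Type*} (ω : X) (d d' : X → X → ℝ)
    (hd_self : ∀ x, d x x = 0) (hd'_self : ∀ x, d' x x = 0)
    (hd_comm : ∀ x y, x ≠ ω → y ≠ ω → d x y = d y x)
    (hd'_comm : ∀ x y, x ≠ ω → y ≠ ω → d' x y = d' y x)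
    (hd_pos : ∀ x y, x ≠ ω → y ≠ ω → x ≠ y → 0 < d x y)
    (hd'_pos : ∀ x y, x ≠ ω → y ≠ ω → x ≠ y → 0 < d' x y)
    (hd_tri : ∀ x y z, x ≠ ω → y ≠ ω → z ≠ ω → d x z ≤ d x y + d y z)
    (hd'_tri : ∀ x y z, x ≠ ω → y ≠ ω → z ≠ ω → d' x z ≤ d' x y + d' y z)
    (hequiv : ∀ x y z u : X, Admissible x y z u →
      ProjEq (crt d ω x y z u) (crt d' ω x y z u)) :
    ∃ lam : ℝ, 0 < lam ∧ ∀ x y, x ≠ ω → y ≠ ω → d' x y = lam * d x y :=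
  moebius_equivalent_same_infinity_homothetic_general ω d d' hd_self hd'_self hd_pos hequiv
end

section
/- Let (X,d) be a metric space with infinitely remote point ω, let o ∈ X, r > 0, and let φ : X → X be a bijective Möbius map (preserving cross-ratio triples) such that φ(ω) = o, φ(o) = ω, and φ(y) = y for all y on the sphere S = {y : d(o,y) = r}. Assume S is nonempty. Then for every x ∈ X distinct from o and ω, d(o,x) · d(o,φ(x)) = r². -/
/-! A Möbius map `φ` swapping `o` and `ω` turns the cross-ratio triple `(d(o,x) : d(o,y) : d(x,y))`
of `(o, x, y, ω)` into `(d(o,φy) : d(o,φx) : d(φx,φy))`, so `d(o,x) d(o,φx) = d(o,y) d(o,φy)`: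
the product is independent of the point. Evaluating it at a fixed point `y` of the sphere gives `r²`. -/

def IsMoebius {X : Type*} (d : X → X → ℝ) (ω : X) (φ : X → X) : Prop :=
  ∀ x y z u : X, Admissible x y z u →
    ProjEq (crt d ω x y z u) (crt d ω (φ x) (φ y) (φ z) (φ u))

theorem admissible_of_ne_of_ne {X : Type*} {x y z u : X} (hxy : x ≠ y) (hzu : z ≠ u) :
    Admissible x y z u := by
  rintro (⟨h, -⟩ | ⟨h, -⟩ | ⟨-, h⟩ | ⟨-, h⟩) <;> contradiction

section CrossRatio

variable {X : Type*} (d : X → X → ℝ) {ω : X}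

theorem crt_remote_right {x y z : X} (hx : x ≠ ω) (hy : y ≠ ω) (hz : z ≠ ω) :
    crt d ω x y z ω = (d x y, d x z, d y z) := by
  simp [crt, hx, hy, hz]

theorem crt_remote_left {y z u : X} (hy : y ≠ ω) (hz : z ≠ ω) (hu : u ≠ ω) :
    crt d ω ω y z u = (d z u, d y u, d y z) := by
  simp [crt, hy, hz, hu]

end CrossRatio

theorem IsMoebius.dist_mul_dist_image_eq {X : Type*} {d : X → X → ℝ} {ω o : X} {φ : X → X}
    (hφ : IsMoebius d ω φ) (hoω : o ≠ ω) (hd_comm : ∀ x y, x ≠ ω → y ≠ ω → d x y = d y x)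
    (hφω : φ ω = o) (hφo : φ o = ω) {x y : X} (hxω : x ≠ ω) (hyω : y ≠ ω)
    (hφxω : φ x ≠ ω) (hφyω : φ y ≠ ω) :
    d o x * d o (φ x) = d o y * d o (φ y) := by
  have hxo : o ≠ x := fun h => hφxω (h ▸ hφo)
  obtain ⟨c, -, h₁, h₂, -⟩ := hφ o x y ω (admissible_of_ne_of_ne hxo hyω)
  rw [hφo, hφω, crt_remote_right d hoω hxω hyω, crt_remote_left d hφxω hφyω hoω] at h₁ h₂
  dsimp only at h₁ h₂
  rw [hd_comm _ _ hoω hφxω, hd_comm _ _ hoω hφyω, h₁, h₂]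
  ring

theorem strong_inversion_radius_identity_general
    {X : Type*} (ω o : X) (hoω : o ≠ ω) (d : X → X → ℝ) (r : ℝ)
    (hd_comm : ∀ x y, x ≠ ω → y ≠ ω → d x y = d y x)
    (φ : X → X) (hbij : Function.Bijective φ)
    (hmob : ∀ x y z u : X, Admissible x y z u →
      ProjEq (crt d ω x y z u) (crt d ω (φ x) (φ y) (φ z) (φ u)))
    (hφω : φ ω = o) (hφo : φ o = ω)
    (hfix : ∀ y, y ≠ ω → d o y = r → φ y = y)
    (hS : ∃ y, y ≠ ω ∧ d o y = r) :
    ∀ x, x ≠ o → x ≠ ω → d o x * d o (φ x) = r ^ 2 := by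
  intro x hxo hxω
  obtain ⟨y, hyω, hyr⟩ := hS
  have hφy : φ y = y := hfix y hyω hyr
  have hφxω : φ x ≠ ω := fun h => hxo (hbij.injective (h.trans hφo.symm))
  calc d o x * d o (φ x) = d o y * d o (φ y) :=
        IsMoebius.dist_mul_dist_image_eq hmob hoω hd_comm hφω hφo hxω hyω hφxω (by rwa [hφy])
    _ = r ^ 2 := by rw [hφy, hyr, sq]

/-- a bijective Möbius map `φ` swapping `o` and the infinitely remote point
`ω` and fixing the nonempty sphere `S = {y | d(o,y) = r}` pointwise satisfies
`d(o,x)·d(o,φ(x)) = r²` for every `x ∉ {o, ω}`. -/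
theorem strong_inversion_radius_identity
    {X : Type*} (ω o : X) (hoω : o ≠ ω) (d : X → X → ℝ) (r : ℝ) (hr : 0 < r)
    (hd_self : ∀ x, d x x = 0)
    (hd_comm : ∀ x y, x ≠ ω → y ≠ ω → d x y = d y x)
    (hd_pos : ∀ x y, x ≠ ω → y ≠ ω → x ≠ y → 0 < d x y)
    (hd_tri : ∀ x y z, x ≠ ω → y ≠ ω → z ≠ ω → d x z ≤ d x y + d y z)
    (φ : X → X) (hbij : Function.Bijective φ)
    (hmob : ∀ x y z u : X, Admissible x y z u →
      ProjEq (crt d ω x y z u) (crt d ω (φ x) (φ y) (φ z) (φ u)))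
    (hφω : φ ω = o) (hφo : φ o = ω)
    (hfix : ∀ y, y ≠ ω → d o y = r → φ y = y)
    (hS : ∃ y, y ≠ ω ∧ d o y = r) :
    ∀ x, x ≠ o → x ≠ ω → d o x * d o (φ x) = r ^ 2 :=
  strong_inversion_radius_identity_general ω o hoω d r hd_comm φ hbij hmob hφω hφo hfix hS
end

section
/- Let X be a compact Ptolemy space with properties (E) and (sI). Then any two distinct Ptolemy circles in X have at most two points in common. -/
/-- A Möbius structure on a compact space `X`: for every point `ω` a metric
`dist ω : X → X → ℝ` on `X \ {ω}` having `ω` as infinitely remote point, all metrics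
pairwise Möbius equivalent, each satisfying the Ptolemy inequality, and compatible
with the topology of `X`. -/
structure MoebiusStructure (X : Type*) [TopologicalSpace X] where
  dist : X → X → X → ℝ
  dist_self : ∀ ω x, dist ω x x = 0
  dist_comm : ∀ ω x y, dist ω x y = dist ω y x
  dist_pos : ∀ ω x y, x ≠ ω → y ≠ ω → x ≠ y → 0 < dist ω x y
  dist_triangle : ∀ ω x y z, x ≠ ω → y ≠ ω → z ≠ ω →
    dist ω x z ≤ dist ω x y + dist ω y z
  ptolemy : ∀ ω x y z u, x ≠ ω → y ≠ ω → z ≠ ω → u ≠ ω →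
    dist ω x z * dist ω y u ≤ dist ω x y * dist ω z u + dist ω x u * dist ω y z
  moebius_equivalent : ∀ ω ω' x y z u, Admissible x y z u →
    ProjEq (crt (dist ω) ω x y z u) (crt (dist ω') ω' x y z u)
  isOpen_ball : ∀ ω x r, x ≠ ω → IsOpen {y | y ≠ ω ∧ dist ω x y < r}
  isOpen_compl_closedBall : ∀ ω x r, x ≠ ω →
    IsOpen ({y | y ≠ ω ∧ r < dist ω x y} ∪ {ω})
  nhds_basis : ∀ ω x, x ≠ ω → ∀ U ∈ nhds x, ∃ r > 0, {y | y ≠ ω ∧ dist ω x y < r} ⊆ U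

namespace MoebiusStructure

variable {X : Type*} [TopologicalSpace X] (S : MoebiusStructure X)

/-- A Möbius map of `(X, S)`: preserves all cross-ratio triples. -/
def IsMoebiusMap (φ : X → X) : Prop :=
  ∀ ω x y z u, Admissible x y z u →
    ProjEq (crt (S.dist ω) ω x y z u) (crt (S.dist ω) ω (φ x) (φ y) (φ z) (φ u))

/-- `(x,z)` separates `(y,u)` on `σ`: `y` and `u` lie in different connected components
of `σ \ {x,z}`. -/
def Separates (σ : Set X) (x z y u : X) : Prop :=
  ∀ C : Set X, IsPreconnected C → C ⊆ σ \ {x, z} → ¬(y ∈ C ∧ u ∈ C)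

/-- A Ptolemy circle: a subset homeomorphic to `S¹` on which the Ptolemy equality holds
for every quadruple of distinct points with separated diagonal. -/
def IsPtolemyCircle (σ : Set X) : Prop :=
  Nonempty (σ ≃ₜ Metric.sphere (0 : ℂ) 1) ∧
    ∀ ω, ∀ x ∈ σ, ∀ y ∈ σ, ∀ z ∈ σ, ∀ u ∈ σ,
      x ≠ ω → y ≠ ω → z ≠ ω → u ≠ ω →
      x ≠ y → x ≠ z → x ≠ u → y ≠ z → y ≠ u → z ≠ u →
      Separates σ x z y u →
      S.dist ω x z * S.dist ω y u =
        S.dist ω x y * S.dist ω z u + S.dist ω x u * S.dist ω y z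

/-- A Ptolemy line in `X_ω`: a Ptolemy circle through `ω` with `ω` removed. -/
def IsPtolemyLine (ω : X) (ℓ : Set X) : Prop :=
  ∃ σ : Set X, S.IsPtolemyCircle σ ∧ ω ∈ σ ∧ ℓ = σ \ {ω}

/-- A metric sphere between `ω` and `ω'`: a sphere of positive radius centered at `ω`
for the metric with infinitely remote point `ω'`. -/
def IsSphereBetween (ω ω' : X) (Sp : Set X) : Prop :=
  ∃ r : ℝ, 0 < r ∧ Sp = {x | x ≠ ω' ∧ S.dist ω' ω x = r}

/-- A strong space inversion w.r.t. `ω`, `ω'` and a metric sphere `Sp` between them: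
a Möbius involution swapping `ω` and `ω'`, fixing `Sp` pointwise, and preserving every
Ptolemy circle through `ω` and `ω'`. -/
def IsStrongInversion (ω ω' : X) (Sp : Set X) (φ : X → X) : Prop :=
  S.IsMoebiusMap φ ∧ Function.Bijective φ ∧ φ ∘ φ = id ∧
    φ ω = ω' ∧ φ ω' = ω ∧ (∀ x ∈ Sp, φ x = x) ∧
    ∀ σ : Set X, S.IsPtolemyCircle σ → ω ∈ σ → ω' ∈ σ → φ '' σ = σ

/-- Property (E): existence of a Ptolemy circle. -/
def PropE : Prop := ∃ σ : Set X, S.IsPtolemyCircle σ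

/-- Property (sI): existence of strong space inversions for every pair of distinct points
and every metric sphere between them. -/
def PropSI : Prop :=
  ∀ ω ω' : X, ω ≠ ω' → ∀ Sp : Set X, S.IsSphereBetween ω ω' Sp →
    ∃ φ : X → X, S.IsStrongInversion ω ω' Sp φ

end MoebiusStructure


/-! A Ptolemy circle `σ` through `a` is a geodesic line for the metric with infinitely remote
point `a`: the Ptolemy equality, read through Möbius equivalence, turns separation on `σ` into
additivity of distances, and a coordinate `σ \ {a} ≃ ℝ` makes this line isometric to `ℝ`.
Composing two strong space inversions with the same pair of poles `a, q` gives a homothety of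
arbitrary ratio centred at `q`, which preserves every Ptolemy circle through `a` and `q`; its
square acts on the line `σ₁ \ {a}` as an orientation-preserving homothety of `ℝ`. If `σ₁, σ₂`
share `a` and two further points, the coordinates of `σ₁ ∩ σ₂ \ {a}` therefore form a subset of
`ℝ` with two points which is stable under all positive homotheties centred at its points, hence
all of `ℝ`, and `σ₁ ⊆ σ₂`. -/

open Set Filter Topology Function Module Metric OnePoint

lemma exists_onePoint_homeomorph_sphere (p : sphere (0 : ℂ) 1) :
    ∃ Φ : OnePoint ℝ ≃ₜ sphere (0 : ℂ) 1, Φ ∞ = p := by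
  have hp : ‖(p : ℂ)‖ = 1 := norm_eq_of_mem_sphere p
  have : Fact (finrank ℝ ℂ = 1 + 1) := ⟨Complex.finrank_real_complex⟩
  have hrank : finrank ℝ ℝ = finrank ℝ (ℝ ∙ (p : ℂ))ᗮ := by
    rw [Module.finrank_self,
      Submodule.finrank_orthogonal_span_singleton (n := 1) (ne_zero_of_mem_unit_sphere p)]
  obtain ⟨e⟩ := FiniteDimensional.nonempty_continuousLinearEquiv_of_finrank_eq hrank
  refine ⟨e.toHomeomorph.onePointCongr.trans (onePointHyperplaneHomeoUnitSphere hp), ?_⟩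
  simp [onePointHyperplaneHomeoUnitSphere, OnePoint.equivOfIsEmbeddingOfRangeEq_apply_infty]

structure IsPuncturedCircleParam {X : Type*} [TopologicalSpace X] (σ : Set X) (a : X)
    (γ : ℝ → X) : Prop where
  continuous : Continuous γ
  injective : Injective γ
  range_eq : range γ = σ \ {a}
  tendsto_cocompact : Tendsto γ (cocompact ℝ) (𝓝 a)

section PuncturedCircleParam

variable {X : Type*} [TopologicalSpace X] {σ : Set X} {a : X} {γ : ℝ → X}

lemma exists_isPuncturedCircleParam (h : σ ≃ₜ sphere (0 : ℂ) 1) (ha : a ∈ σ) :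
    ∃ γ, IsPuncturedCircleParam σ a γ := by
  obtain ⟨Φ, hΦ⟩ := exists_onePoint_homeomorph_sphere (h ⟨a, ha⟩)
  set Ψ : OnePoint ℝ ≃ₜ σ := Φ.trans h.symm
  have hΨ : Ψ ∞ = ⟨a, ha⟩ := by simp [Ψ, hΦ]
  refine ⟨fun t => Ψ t, continuous_subtype_val.comp (Ψ.continuous.comp continuous_coe),
    Subtype.val_injective.comp (Ψ.injective.comp coe_injective), ?_, ?_⟩
  · have : range (fun t : ℝ => Ψ t) = {Ψ ∞}ᶜ := by
      rw [range_comp' Ψ, ← compl_infty, Ψ.image_compl, image_singleton]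
    rw [range_comp' Subtype.val, this, hΨ]
    ext x
    simp
  · have h := (Ψ.continuous.tendsto ∞).comp tendsto_coe_infty
    rw [coclosedCompact_eq_cocompact, hΨ] at h
    exact (continuous_subtype_val.tendsto _).comp h

namespace IsPuncturedCircleParam

variable (hγ : IsPuncturedCircleParam σ a γ)
include hγ

lemma apply_mem (t : ℝ) : γ t ∈ σ := (hγ.range_eq ▸ mem_range_self t : γ t ∈ σ \ {a}).1

lemma apply_ne (t : ℝ) : γ t ≠ a := (hγ.range_eq ▸ mem_range_self t : γ t ∈ σ \ {a}).2

lemma infinite : σ.Infinite :=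
  (infinite_range_of_injective hγ.injective).mono (hγ.range_eq ▸ sdiff_subset)

/- `σ` is covered by the compact arc `γ [s, u]` and the compact set `{a} ∪ γ (ℝ \ (s, u))`,
which meet only in `γ s` and `γ u`. -/
lemma separates [T2Space X] {s t u : ℝ} (hst : s < t) (htu : t < u) :
    MoebiusStructure.Separates σ (γ s) (γ u) (γ t) a := by
  rintro C hC hCσ ⟨htC, haC⟩
  have ha : a ∉ range γ := fun h => (hγ.range_eq ▸ h).2 rfl
  set K₁ := γ '' Icc s u
  set K₂ := insert a (γ '' (Ioo s u)ᶜ)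
  have hK₁ : IsClosed K₁ := (isCompact_Icc.image hγ.continuous).isClosed
  have hK₂ : IsClosed K₂ := by
    have hcl : IsClosed (Ioo s u)ᶜ := isOpen_Ioo.isClosed_compl
    have := (hγ.tendsto_cocompact.comp hcl.isClosedEmbedding_subtypeVal.tendsto_cocompact
      ).isCompact_insert_range_of_cocompact (hγ.continuous.comp continuous_subtype_val)
    rw [range_comp, Subtype.range_coe] at this
    exact this.isClosed
  have hσ : σ ⊆ K₁ ∪ K₂ := by
    intro x hx
    by_cases hxa : x = a
    · exact Or.inr (Or.inl hxa)
    obtain ⟨r, rfl⟩ : x ∈ range γ := hγ.range_eq ▸ ⟨hx, hxa⟩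
    by_cases hr : r ∈ Ioo s u
    · exact Or.inl ⟨r, Ioo_subset_Icc_self hr, rfl⟩
    · exact Or.inr (Or.inr ⟨r, hr, rfl⟩)
  have hK : K₁ ∩ K₂ ⊆ {γ s, γ u} := by
    rintro _ ⟨⟨r, hr, rfl⟩, h | ⟨r', hr', h⟩⟩
    · exact absurd ⟨r, h⟩ ha
    rw [hγ.injective h] at hr'
    rcases hr.1.eq_or_lt with rfl | h₁
    · exact Or.inl rfl
    rcases hr.2.eq_or_lt with rfl | h₂
    · exact Or.inr rfl
    exact absurd ⟨h₁, h₂⟩ hr'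
  have hCK : C ⊆ K₂ᶜ ∪ K₁ᶜ := fun x hx => by
    by_contra h
    simp only [mem_union, mem_compl_iff, not_or, not_not] at h
    exact (hCσ hx).2 (hK ⟨h.2, h.1⟩)
  have htK₂ : γ t ∉ K₂ := by
    rintro (h | ⟨r, hr, h⟩)
    · exact ha ⟨t, h⟩
    · exact hr (hγ.injective h ▸ ⟨hst, htu⟩)
  have haK₁ : a ∉ K₁ := fun ⟨r, _, h⟩ => ha ⟨r, h⟩
  obtain ⟨x, hxC, hx₂, hx₁⟩ :=
    hC _ _ hK₂.isOpen_compl hK₁.isOpen_compl hCK ⟨γ t, htC, htK₂⟩ ⟨a, haC, haK₁⟩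
  exact (hσ (hCσ hxC).1).elim hx₁ hx₂

end IsPuncturedCircleParam

end PuncturedCircleParam

lemma exists_eq_sub_of_add_eq {α : Type*} [LinearOrder α] [Nonempty α] {f : α → α → ℝ}
    (hf : ∀ s t u, s ≤ t → t ≤ u → f s u = f s t + f t u) :
    ∃ G : α → ℝ, ∀ s t, s ≤ t → f s t = G t - G s := by
  obtain ⟨o⟩ := ‹Nonempty α›
  refine ⟨fun t => if o ≤ t then f o t else -f t o, fun s t hst => ?_⟩
  by_cases hs : o ≤ s
  · simp only [if_pos hs, if_pos (hs.trans hst)]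
    linarith [hf o s t hs hst]
  by_cases ht : o ≤ t
  · simp only [if_neg hs, if_pos ht]
    linarith [hf s o t (le_of_not_ge hs) ht]
  · simp only [if_neg hs, if_neg ht]
    linarith [hf s t o hst (le_of_not_ge ht)]

/- Expanding `(u - v)² = l² (v - w)²` with `u = F (ψ (ψ x)) - F q`, `v = F (ψ x) - F q`,
`w = F x - F q` gives `v (u - l² w) = 0`. -/
lemma sub_eq_sq_mul_sub_of_abs_sub_eq {α : Type*} {F : α → ℝ} {ψ : α → α} {L : Set α}
    {q : α} {l : ℝ} (hL : MapsTo ψ L L) (hq : q ∈ L) (hψq : ψ q = q)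
    (hψ : ∀ x ∈ L, ∀ y ∈ L, |F (ψ x) - F (ψ y)| = l * |F x - F y|) {x : α} (hx : x ∈ L) :
    F (ψ (ψ x)) - F q = l ^ 2 * (F x - F q) := by
  have hsq : ∀ y ∈ L, ∀ z ∈ L, (F (ψ y) - F (ψ z)) ^ 2 = l ^ 2 * (F y - F z) ^ 2 :=
    fun y hy z hz => by rw [← sq_abs, hψ y hy z hz, mul_pow, sq_abs]
  have h₁ := hsq (ψ x) (hL hx) q hq
  have h₂ := hsq x hx q hq
  have h₃ := hsq (ψ x) (hL hx) x hx
  rw [hψq] at h₁ h₂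
  have key : (F (ψ x) - F q) * (F (ψ (ψ x)) - F q - l ^ 2 * (F x - F q)) = 0 := by
    linear_combination (-1 / 2 : ℝ) * h₃ + (1 / 2 : ℝ) * h₁ + (1 / 2 : ℝ) * h₂
  rcases mul_eq_zero.1 key with h | h
  · rw [sub_eq_zero.1 h, sub_self] at h₁ h₂
    have hu : F (ψ (ψ x)) - F q = 0 := pow_eq_zero_iff two_ne_zero |>.1 (by linear_combination h₁)
    have hw : l ^ 2 * (F x - F q) = 0 :=
      pow_eq_zero_iff two_ne_zero |>.1 (by linear_combination (-l ^ 2) * h₂)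
    rw [hu, hw]
  · linarith

lemma eq_univ_of_forall_homothety_mem {T : Set ℝ} {b c : ℝ} (hb : b ∈ T) (hc : c ∈ T)
    (hbc : b ≠ c) (hT : ∀ q ∈ T, ∀ t ∈ T, ∀ r : ℝ, 0 < r → q + r * (t - q) ∈ T) :
    T = univ := by
  refine eq_univ_of_forall fun τ => ?_
  have hcb : c - b ≠ 0 := sub_ne_zero.2 hbc.symm
  rcases lt_or_ge 0 ((τ - b) / (c - b)) with h | h
  · convert hT b hb c hc _ h using 1
    field_simp
    ring
  · convert hT c hc b hb (1 - (τ - b) / (c - b)) (by linarith) using 1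
    field_simp
    ring

lemma Admissible.of_ne {Y : Type*} {x y z u : Y} (hxy : x ≠ y) (hxz : x ≠ z) (hyz : y ≠ z) :
    Admissible x y z u := by
  simp [Admissible, hxy, hxz, hyz]

section crt

variable {Y : Type*} (d : Y → Y → ℝ) {ω x y z u : Y}

lemma crt_of_ne (hx : x ≠ ω) (hy : y ≠ ω) (hz : z ≠ ω) (hu : u ≠ ω) :
    crt d ω x y z u = (d x y * d z u, d x z * d y u, d x u * d y z) := by
  simp [crt, hx, hy, hz, hu]

lemma crt_remote_fst (hy : y ≠ ω) (hz : z ≠ ω) (hu : u ≠ ω) :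
    crt d ω ω y z u = (d z u, d y u, d y z) := by
  simp [crt, hy, hz, hu]

lemma crt_remote_snd (hx : x ≠ ω) (hz : z ≠ ω) (hu : u ≠ ω) :
    crt d ω x ω z u = (d z u, d x z, d x u) := by
  simp [crt, hx, hz, hu]

lemma crt_remote_fourth (hx : x ≠ ω) (hy : y ≠ ω) (hz : z ≠ ω) :
    crt d ω x y z ω = (d x y, d x z, d y z) := by
  simp [crt, hx, hy, hz]

end crt

namespace MoebiusStructure

variable {X : Type*} [TopologicalSpace X] (S : MoebiusStructure X)

lemma dist_nonneg {ω x y : X} (hx : x ≠ ω) (hy : y ≠ ω) : 0 ≤ S.dist ω x y := by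
  rcases eq_or_ne x y with rfl | hxy
  · rw [S.dist_self]
  · exact (S.dist_pos ω x y hx hy hxy).le

lemma continuousAt_dist {ω q x : X} (hq : q ≠ ω) (hx : x ≠ ω) :
    ContinuousAt (S.dist ω q) x := by
  have hball : ∀ r, S.dist ω q x < r → ∀ᶠ y in 𝓝 x, y ≠ ω ∧ S.dist ω q y < r :=
    fun r hr => (S.isOpen_ball ω q r hq).mem_nhds ⟨hx, hr⟩
  refine tendsto_order.2 ⟨fun r hr => ?_, fun r hr => (hball r hr).mono fun y hy => hy.2⟩
  filter_upwards [(S.isOpen_compl_closedBall ω q r hq).mem_nhds (Or.inl ⟨hx, hr⟩),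
    hball _ (lt_add_one _)] with y hy hy'
  exact hy.elim (·.2) fun h => absurd h hy'.1

lemma eventually_lt_dist {ω q : X} (hq : q ≠ ω) (r : ℝ) :
    ∀ᶠ y in 𝓝 ω, y ≠ ω → r < S.dist ω q y := by
  filter_upwards [(S.isOpen_compl_closedBall ω q r hq).mem_nhds (Or.inr rfl)] with y hy hyω
  exact hy.elim (·.2) fun h => absurd h hyω

lemma tendsto_dist_cocompact {σ : Set X} {ω q : X} {γ : ℝ → X}
    (hγ : IsPuncturedCircleParam σ ω γ) (hq : q ≠ ω) :
    Tendsto (fun t => S.dist ω q (γ t)) (cocompact ℝ) atTop :=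
  tendsto_atTop.2 fun r => (hγ.tendsto_cocompact.eventually (S.eventually_lt_dist hq r)).mono
    fun t ht => (ht (hγ.apply_ne t)).le

/- The Ptolemy equality for the metric with remote point `ω`, rescaled by Möbius equivalence
to the metric with remote point `a`, degenerates to additivity. -/
lemma IsPtolemyCircle.dist_add_dist_of_separates {σ : Set X} (hσ : S.IsPtolemyCircle σ)
    (hinf : σ.Infinite) {a x y z : X} (ha : a ∈ σ) (hx : x ∈ σ) (hy : y ∈ σ) (hz : z ∈ σ)
    (hxa : x ≠ a) (hya : y ≠ a) (hza : z ≠ a) (hxy : x ≠ y) (hxz : x ≠ z) (hyz : y ≠ z)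
    (hsep : Separates σ x z y a) :
    S.dist a x y + S.dist a y z = S.dist a x z := by
  obtain ⟨ω, hωσ, hω⟩ := (hinf.sdiff (toFinite {x, y, z, a})).nonempty
  simp only [mem_insert_iff, mem_singleton_iff, not_or] at hω
  obtain ⟨hωx, hωy, hωz, hωa⟩ := hω
  have hptolemy := hσ.2 ω x hx y hy z hz a ha (Ne.symm hωx) (Ne.symm hωy) (Ne.symm hωz)
    (Ne.symm hωa) hxy hxz hxa hyz hya hza hsep
  have hme := S.moebius_equivalent ω a x y z a (.of_ne hxy hxz hyz)
  rw [crt_of_ne _ (Ne.symm hωx) (Ne.symm hωy) (Ne.symm hωz) (Ne.symm hωa),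
    crt_remote_fourth _ hxa hya hza] at hme
  obtain ⟨c, -, h₁, h₂, h₃⟩ := hme
  dsimp only at h₁ h₂ h₃
  linear_combination h₁ + h₃ - h₂ - c * hptolemy

lemma IsPtolemyCircle.exists_surjective_isometry_param [T2Space X] {σ : Set X} {a : X}
    {γ : ℝ → X} (hσ : S.IsPtolemyCircle σ) (ha : a ∈ σ) (hγ : IsPuncturedCircleParam σ a γ) :
    ∃ G : ℝ → ℝ, Surjective G ∧ ∀ s t, S.dist a (γ s) (γ t) = |G s - G t| := by
  have hadd : ∀ s t u, s ≤ t → t ≤ u →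
      S.dist a (γ s) (γ u) = S.dist a (γ s) (γ t) + S.dist a (γ t) (γ u) := by
    intro s t u hst htu
    rcases hst.eq_or_lt with rfl | hst
    · rw [S.dist_self, zero_add]
    rcases htu.eq_or_lt with rfl | htu
    · rw [S.dist_self, add_zero]
    exact (hσ.dist_add_dist_of_separates S hγ.infinite ha (hγ.apply_mem s) (hγ.apply_mem t)
      (hγ.apply_mem u) (hγ.apply_ne s) (hγ.apply_ne t) (hγ.apply_ne u)
      (hγ.injective.ne hst.ne) (hγ.injective.ne (hst.trans htu).ne) (hγ.injective.ne htu.ne)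
      (hγ.separates hst htu)).symm
  obtain ⟨G, hG⟩ := exists_eq_sub_of_add_eq hadd
  have hiso : ∀ s t, S.dist a (γ s) (γ t) = |G s - G t| := by
    intro s t
    rcases le_total s t with h | h
    · rw [abs_sub_comm, abs_of_nonneg (hG s t h ▸ S.dist_nonneg (hγ.apply_ne s) (hγ.apply_ne t)),
        hG s t h]
    · rw [S.dist_comm, abs_of_nonneg (hG t s h ▸ S.dist_nonneg (hγ.apply_ne t) (hγ.apply_ne s)),
        hG t s h]
  have hcont : Continuous G := by
    refine continuous_iff_continuousAt.2 fun t => tendsto_iff_dist_tendsto_zero.2 ?_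
    have h := (S.continuousAt_dist (hγ.apply_ne t) (hγ.apply_ne t)).comp
      hγ.continuous.continuousAt
    simp only [ContinuousAt, comp_def, S.dist_self] at h
    simpa only [Real.dist_eq, ← hiso, S.dist_comm a _ (γ t)] using h
  have hdist := (S.tendsto_dist_cocompact hγ (hγ.apply_ne 0))
  refine ⟨G, hcont.surjective ?_ ?_, hiso⟩
  · refine (tendsto_atTop_add_const_left _ (G 0) (hdist.mono_left atTop_le_cocompact)).congr'
      ((eventually_ge_atTop 0).mono fun t ht => ?_)
    rw [hG 0 t ht]
    ring
  · refine (tendsto_atBot_add_const_left _ (G 0)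
      (tendsto_neg_atTop_atBot.comp (hdist.mono_left atBot_le_cocompact))).congr'
      ((eventually_le_atBot 0).mono fun t ht => ?_)
    rw [comp_apply, S.dist_comm, hG t 0 ht]
    ring

lemma IsPtolemyCircle.exists_surjective_isometry [T2Space X] {σ : Set X} {a : X}
    (hσ : S.IsPtolemyCircle σ) (ha : a ∈ σ) :
    ∃ F : X → ℝ, (∀ x ∈ σ \ {a}, ∀ y ∈ σ \ {a}, S.dist a x y = |F x - F y|) ∧
      ∀ τ, ∃ x ∈ σ \ {a}, F x = τ := by
  obtain ⟨h⟩ := hσ.1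
  obtain ⟨γ, hγ⟩ := exists_isPuncturedCircleParam h ha
  obtain ⟨G, hGsurj, hG⟩ := hσ.exists_surjective_isometry_param S ha hγ
  have hinv : ∀ t, invFun γ (γ t) = t := leftInverse_invFun hγ.injective
  refine ⟨G ∘ invFun γ, ?_, fun τ => ?_⟩
  · rw [← hγ.range_eq]
    rintro _ ⟨s, rfl⟩ _ ⟨t, rfl⟩
    rw [comp_apply, comp_apply, hinv, hinv, hG]
  · obtain ⟨t, rfl⟩ := hGsurj τ
    exact ⟨γ t, hγ.range_eq ▸ mem_range_self t, by rw [comp_apply, hinv]⟩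

lemma IsMoebiusMap.dist_eq_of_swap {φ : X → X} (hφ : S.IsMoebiusMap φ) (hinj : Injective φ)
    {a b : X} (hab : a ≠ b) (ha : φ a = b) (hb : φ b = a) {x y : X} (hxa : x ≠ a) (hxb : x ≠ b)
    (hya : y ≠ a) (hyb : y ≠ b) :
    ∃ c, S.dist a (φ x) (φ y) = c * S.dist a x y ∧ S.dist a b (φ x) = c * S.dist a b y ∧
      S.dist a b (φ y) = c * S.dist a b x := by
  have h := hφ a a b x y (.of_ne hab (Ne.symm hxa) (Ne.symm hxb))
  rw [ha, hb, crt_remote_fst _ (Ne.symm hab) hxa hya,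
    crt_remote_snd _ (Ne.symm hab) (fun h => hxb (hinj (h.trans hb.symm)))
      (fun h => hyb (hinj (h.trans hb.symm)))] at h
  obtain ⟨c, -, h₁, h₂, h₃⟩ := h
  exact ⟨c, h₁, h₂, h₃⟩

lemma exists_inversion (hSI : S.PropSI) {a q s : X} (hqa : q ≠ a) (hsa : s ≠ a) (hsq : s ≠ q) :
    ∃ φ : X → X, Injective φ ∧ φ a = q ∧ φ q = a ∧
      (∀ σ, S.IsPtolemyCircle σ → a ∈ σ → q ∈ σ → MapsTo φ σ σ) ∧
      (∀ x, x ≠ a → x ≠ q → S.dist a q (φ x) = S.dist a q s ^ 2 / S.dist a q x) ∧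
      ∀ x y, x ≠ a → x ≠ q → y ≠ a → y ≠ q →
        S.dist a (φ x) (φ y) = S.dist a q s ^ 2 * S.dist a x y / (S.dist a q x * S.dist a q y) := by
  obtain ⟨φ, hmob, hbij, -, hφa, hφq, hfix, hcirc⟩ :=
    hSI a q hqa.symm {x | x ≠ q ∧ S.dist q a x = S.dist q a s}
      ⟨_, S.dist_pos q a s hqa.symm hsq hsa.symm, rfl⟩
  have hφs : φ s = s := hfix s ⟨hsq, rfl⟩
  have hq_pos : ∀ x, x ≠ a → x ≠ q → 0 < S.dist a q x :=
    fun x hxa hxq => S.dist_pos a q x hqa hxa hxq.symm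
  have hsphere : ∀ x, x ≠ a → x ≠ q → S.dist a q (φ x) = S.dist a q s ^ 2 / S.dist a q x := by
    intro x hxa hxq
    obtain ⟨c, -, h₁, h₂⟩ := hmob.dist_eq_of_swap S hbij.1 hqa.symm hφa hφq hxa hxq hsa hsq
    rw [hφs] at h₂
    rw [eq_div_iff (hq_pos x hxa hxq).ne', h₁, h₂]
    ring
  refine ⟨φ, hbij.1, hφa, hφq, fun σ hσ ha hq => mapsTo_iff_image_subset.2 (hcirc σ hσ ha hq).le,
    hsphere, fun x y hxa hxq hya hyq => ?_⟩
  obtain ⟨c, h, h₁, -⟩ := hmob.dist_eq_of_swap S hbij.1 hqa.symm hφa hφq hxa hxq hya hyq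
  have hc : c = S.dist a q s ^ 2 / (S.dist a q x * S.dist a q y) := by
    rw [hsphere x hxa hxq] at h₁
    have := hq_pos y hya hyq
    field_simp at h₁ ⊢
    linarith
  rw [h, hc]
  ring

lemma exists_homothety (hSI : S.PropSI) {a q s₁ s₂ : X} (hqa : q ≠ a) (hs₁a : s₁ ≠ a)
    (hs₁q : s₁ ≠ q) (hs₂a : s₂ ≠ a) (hs₂q : s₂ ≠ q) :
    ∃ ψ : X → X, ψ q = q ∧ (∀ x, x ≠ a → ψ x ≠ a) ∧
      (∀ σ, S.IsPtolemyCircle σ → a ∈ σ → q ∈ σ → MapsTo ψ σ σ) ∧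
      ∀ x y, x ≠ a → y ≠ a →
        S.dist a (ψ x) (ψ y) = (S.dist a q s₂ / S.dist a q s₁) ^ 2 * S.dist a x y := by
  obtain ⟨φ₁, hinj₁, ha₁, hq₁, hσ₁, hκ₁, hd₁⟩ := S.exists_inversion hSI hqa hs₁a hs₁q
  obtain ⟨φ₂, hinj₂, ha₂, hq₂, hσ₂, hκ₂, hd₂⟩ := S.exists_inversion hSI hqa hs₂a hs₂q
  have hout : ∀ φ : X → X, Injective φ → φ a = q → φ q = a →
      ∀ x, x ≠ a → x ≠ q → φ x ≠ a ∧ φ x ≠ q := fun φ hinj ha hq x hxa hxq =>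
    ⟨fun h => hxq (hinj (h.trans hq.symm)), fun h => hxa (hinj (h.trans ha.symm))⟩
  have hpos : ∀ x, x ≠ a → x ≠ q → S.dist a q x ≠ 0 :=
    fun x hxa hxq => (S.dist_pos a q x hqa hxa hxq.symm).ne'
  have hψq : φ₂ (φ₁ q) = q := by rw [hq₁, ha₂]
  have hdq : ∀ y, y ≠ a → y ≠ q →
      S.dist a q (φ₂ (φ₁ y)) = (S.dist a q s₂ / S.dist a q s₁) ^ 2 * S.dist a q y := by
    intro y hya hyq
    obtain ⟨hy'a, hy'q⟩ := hout φ₁ hinj₁ ha₁ hq₁ y hya hyq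
    rw [hκ₂ _ hy'a hy'q, hκ₁ y hya hyq]
    field_simp [hpos s₁ hs₁a hs₁q, hpos y hya hyq]
  refine ⟨φ₂ ∘ φ₁, hψq, fun x hxa => ?_,
    fun σ hσ ha hq => (hσ₂ σ hσ ha hq).comp (hσ₁ σ hσ ha hq), fun x y hxa hya => ?_⟩
  · rcases eq_or_ne x q with rfl | hxq
    · rwa [comp_apply, hψq]
    obtain ⟨hx'a, hx'q⟩ := hout φ₁ hinj₁ ha₁ hq₁ x hxa hxq
    exact (hout φ₂ hinj₂ ha₂ hq₂ _ hx'a hx'q).1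
  rcases eq_or_ne x q with rfl | hxq
  · rcases eq_or_ne y x with rfl | hyx
    · simp only [S.dist_self, mul_zero]
    rw [comp_apply, comp_apply, hψq, hdq y hya hyx]
  rcases eq_or_ne y q with rfl | hyq
  · rw [S.dist_comm, S.dist_comm a x, comp_apply, comp_apply, hψq, hdq x hxa hxq]
  obtain ⟨hx'a, hx'q⟩ := hout φ₁ hinj₁ ha₁ hq₁ x hxa hxq
  obtain ⟨hy'a, hy'q⟩ := hout φ₁ hinj₁ ha₁ hq₁ y hya hyq
  rw [comp_apply, comp_apply, hd₂ _ _ hx'a hx'q hy'a hy'q, hd₁ x y hxa hxq hya hyq,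
    hκ₁ x hxa hxq, hκ₁ y hya hyq]
  field_simp [hpos s₁ hs₁a hs₁q, hpos x hxa hxq, hpos y hya hyq]

lemma exists_homothety_coord (hSI : S.PropSI) {σ : Set X} {a q : X} {F : X → ℝ}
    (hσ : S.IsPtolemyCircle σ) (ha : a ∈ σ)
    (hF : ∀ x ∈ σ \ {a}, ∀ y ∈ σ \ {a}, S.dist a x y = |F x - F y|)
    (hFsurj : ∀ τ, ∃ x ∈ σ \ {a}, F x = τ) (hq : q ∈ σ \ {a}) {r : ℝ} (hr : 0 < r) :
    ∃ Ψ : X → X,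
      (∀ σ', S.IsPtolemyCircle σ' → a ∈ σ' → q ∈ σ' → MapsTo Ψ (σ' \ {a}) (σ' \ {a})) ∧
      ∀ x ∈ σ \ {a}, F (Ψ x) - F q = r * (F x - F q) := by
  set m := √(√r)
  have hm : (m ^ 2) ^ 2 = r := by
    rw [Real.sq_sqrt (Real.sqrt_nonneg r), Real.sq_sqrt hr.le]
  have hm_pos : 0 < m := Real.sqrt_pos.2 (Real.sqrt_pos.2 hr)
  obtain ⟨s₁, hs₁, hFs₁⟩ := hFsurj (F q + 1)
  obtain ⟨s₂, hs₂, hFs₂⟩ := hFsurj (F q + m)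
  have hd₁ : S.dist a q s₁ = 1 := by rw [hF q hq s₁ hs₁, hFs₁]; simp
  have hd₂ : S.dist a q s₂ = m := by rw [hF q hq s₂ hs₂, hFs₂]; simp [hm_pos.le]
  have hne : ∀ s, S.dist a q s ≠ 0 → s ≠ q := fun s h hsq => h (hsq ▸ S.dist_self a q)
  obtain ⟨ψ, hψq, hψa, hψσ, hψ⟩ := S.exists_homothety hSI hq.2 hs₁.2
    (hne s₁ (by rw [hd₁]; exact one_ne_zero)) hs₂.2 (hne s₂ (by rw [hd₂]; exact hm_pos.ne'))
  rw [hd₁, hd₂, div_one] at hψ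
  -- `ψ` scales `S.dist a` by `m ^ 2`, so `ψ ∘ ψ` scales `F` around `F q` by `m ^ 4 = r`.
  have hmaps : ∀ σ', S.IsPtolemyCircle σ' → a ∈ σ' → q ∈ σ' →
      MapsTo ψ (σ' \ {a}) (σ' \ {a}) :=
    fun σ' h' ha' hq' x hx => ⟨hψσ σ' h' ha' hq' hx.1, hψa x hx.2⟩
  refine ⟨ψ ∘ ψ, fun σ' h' ha' hq' => (hmaps σ' h' ha' hq').comp (hmaps σ' h' ha' hq'),
    fun x hx => ?_⟩
  have hL := hmaps σ hσ ha hq.1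
  rw [← hm]
  exact sub_eq_sq_mul_sub_of_abs_sub_eq hL hq hψq (fun x hx y hy => by
    rw [← hF _ (hL hx) _ (hL hy), hψ x y hx.2 hy.2, hF x hx y hy]) hx

lemma IsPtolemyCircle.subset_of_three_mem [T2Space X] (hSI : S.PropSI) {σ₁ σ₂ : Set X}
    (h₁ : S.IsPtolemyCircle σ₁) (h₂ : S.IsPtolemyCircle σ₂) {a b c : X} (ha : a ∈ σ₁ ∩ σ₂)
    (hb : b ∈ σ₁ ∩ σ₂) (hc : c ∈ σ₁ ∩ σ₂) (hab : a ≠ b) (hac : a ≠ c) (hbc : b ≠ c) :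
    σ₁ ⊆ σ₂ := by
  obtain ⟨F, hF, hFsurj⟩ := h₁.exists_surjective_isometry S ha.1
  have hinj : InjOn F (σ₁ \ {a}) := fun x hx y hy h => by
    by_contra hxy
    have := S.dist_pos a x y hx.2 hy.2 hxy
    rw [hF x hx y hy, h, sub_self, abs_zero] at this
    exact this.false
  set L := (σ₁ ∩ σ₂) \ {a}
  have hL : L ⊆ σ₁ \ {a} := fun x hx => ⟨hx.1.1, hx.2⟩
  have hbL : b ∈ L := ⟨hb, hab.symm⟩
  have hcL : c ∈ L := ⟨hc, hac.symm⟩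
  have hT : F '' L = univ := by
    refine eq_univ_of_forall_homothety_mem (mem_image_of_mem F hbL) (mem_image_of_mem F hcL)
      (fun h => hbc (hinj (hL hbL) (hL hcL) h)) ?_
    rintro _ ⟨q, hq, rfl⟩ _ ⟨t, ht, rfl⟩ r hr
    obtain ⟨Ψ, hΨ, hΨF⟩ := S.exists_homothety_coord hSI h₁ ha.1 hF hFsurj (hL hq) hr
    have ht₁ := hΨ σ₁ h₁ ha.1 hq.1.1 ⟨ht.1.1, ht.2⟩
    have ht₂ := hΨ σ₂ h₂ ha.2 hq.1.2 ⟨ht.1.2, ht.2⟩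
    exact ⟨Ψ t, ⟨⟨ht₁.1, ht₂.1⟩, ht₁.2⟩, by linarith [hΨF t (hL ht)]⟩
  intro x hx
  rcases eq_or_ne x a with rfl | hxa
  · exact ha.2
  obtain ⟨t, ht, hFt⟩ : F x ∈ F '' L := hT ▸ mem_univ _
  exact hinj (hL ht) ⟨hx, hxa⟩ hFt ▸ ht.1.2

end MoebiusStructure

theorem distinct_ptolemy_circles_meet_in_at_most_two_points_general
    {X : Type*} [TopologicalSpace X] [T2Space X]
    (S : MoebiusStructure X) (hSI : S.PropSI)
    (σ₁ σ₂ : Set X) (h₁ : S.IsPtolemyCircle σ₁) (h₂ : S.IsPtolemyCircle σ₂)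
    (hne : σ₁ ≠ σ₂) :
    ¬ ∃ a b c : X, a ∈ σ₁ ∩ σ₂ ∧ b ∈ σ₁ ∩ σ₂ ∧ c ∈ σ₁ ∩ σ₂ ∧
      a ≠ b ∧ a ≠ c ∧ b ≠ c := by
  rintro ⟨a, b, c, ha, hb, hc, hab, hac, hbc⟩
  exact hne (subset_antisymm (h₁.subset_of_three_mem S hSI h₂ ha hb hc hab hac hbc)
    (h₂.subset_of_three_mem S hSI h₁ (inter_comm σ₁ σ₂ ▸ ha) (inter_comm σ₁ σ₂ ▸ hb)
      (inter_comm σ₁ σ₂ ▸ hc) hab hac hbc))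

/-- in a compact Ptolemy space with properties (E) and (sI), two distinct
Ptolemy circles have at most two points in common. -/
theorem distinct_ptolemy_circles_meet_in_at_most_two_points
    {X : Type*} [TopologicalSpace X] [CompactSpace X] [T2Space X]
    (S : MoebiusStructure X) (hE : S.PropE) (hSI : S.PropSI)
    (σ₁ σ₂ : Set X) (h₁ : S.IsPtolemyCircle σ₁) (h₂ : S.IsPtolemyCircle σ₂)
    (hne : σ₁ ≠ σ₂) :
    ¬ ∃ a b c : X, a ∈ σ₁ ∩ σ₂ ∧ b ∈ σ₁ ∩ σ₂ ∧ c ∈ σ₁ ∩ σ₂ ∧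
      a ≠ b ∧ a ≠ c ∧ b ≠ c :=
  distinct_ptolemy_circles_meet_in_at_most_two_points_general S hSI σ₁ σ₂ h₁ h₂ hne
end

section
/- Let X be a Ptolemy metric space (satisfying the Ptolemy inequality d(x,z)d(y,u) ≤ d(x,y)d(z,u) + d(x,u)d(y,z) for all quadruples). Let ℓ, ℓ' be Busemann parallel geodesic lines in X with common Busemann function b, and let x, y ∈ ℓ, x', y' ∈ ℓ' with b(x) = b(x') and b(y) = b(y'). Assume there are symmetries of X fixing horospheres of b pointwise-on-level and exchanging equidistant levels (i.e., for each horosphere H there is an isometry φ of X fixing H pointwise level-wise with φ(ℓ) = ℓ, φ(ℓ') = ℓ', reflecting the b-coordinate). Then d(x,y) = d(x',y'), d(x,x') = d(y,y'), d(x,y') = d(y,x'), and d(x',y) ≥ d(x,x'). -/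
/-!
A symmetry about the horosphere at level `-m` acts on both lines as the reflection
`u ↦ 2m - u` of the parameter; choosing `m` halfway between the levels of `x` and `y`
exchanges `x ↔ y` and `x' ↔ y'`. For the inequality, reflect `y'` about the level of `x`
to get `z ∈ ℓ'` with `d(x,z) = d(x,y')` and `x'` the midpoint of `z, y'`; Ptolemy's inequality for `x, z, x', y'` then gives `d(x,x') ≤ d(x,y')`.
-/

open Set

lemma apply_eq_of_reflect {X : Type*} {b : X → ℝ} {ℓ : ℝ → X} (hbℓ : ∀ t, b (ℓ t) = -t)
    {φ : X → X} {β : ℝ} (hφb : ∀ p, b (φ p) = 2 * β - b p) (hφℓ : φ '' range ℓ = range ℓ)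
    {u v : ℝ} (huv : u + v = -(2 * β)) : φ (ℓ u) = ℓ v := by
  obtain ⟨w, hw⟩ : φ (ℓ u) ∈ range ℓ := hφℓ ▸ mem_image_of_mem φ (mem_range_self u)
  have hbw := hφb (ℓ u)
  rw [← hw, hbℓ, hbℓ] at hbw
  rw [← hw, show w = v by linarith]

lemma dist_eq_of_add_eq {X : Type*} [MetricSpace X] {b : X → ℝ} {c c' : ℝ → X}
    (hbc : ∀ t, b (c t) = -t) (hbc' : ∀ t, b (c' t) = -t)
    (hsym : ∀ β : ℝ, ∃ φ : X → X, Isometry φ ∧ (∀ p, b (φ p) = 2 * β - b p) ∧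
      φ '' range c = range c ∧ φ '' range c' = range c')
    {u v u' v' : ℝ} (h : u + v = u' + v') : dist (c u) (c' u') = dist (c v) (c' v') := by
  obtain ⟨φ, hφ, hφb, hφc, hφc'⟩ := hsym (-(u + v) / 2)
  rw [← hφ.dist_eq, apply_eq_of_reflect hbc hφb hφc (v := v) (by ring),
    apply_eq_of_reflect hbc' hφb hφc' (v := v') (by linarith)]

lemma dist_le_of_isMidpoint {X : Type*} [MetricSpace X]
    (hpt : ∀ x y z u : X, dist x z * dist y u ≤ dist x y * dist z u + dist x u * dist y z)
    {p z m w : X} (hzm : 2 * dist z m = dist z w) (hmw : 2 * dist m w = dist z w)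
    (hp : dist p z = dist p w) : dist p m ≤ dist p w := by
  rcases (dist_nonneg (x := z) (y := w)).eq_or_lt with hzw | hzw
  · rw [dist_eq_zero.mp (by linarith : dist m w = 0)]
  · have hptol := hpt p z m w
    rw [hp, ← mul_add, show dist m w + dist z m = dist z w by linarith] at hptol
    exact le_of_mul_le_mul_right hptol hzw

lemma dist_le_of_dist_eq_reflect {X : Type*} [MetricSpace X]
    (hpt : ∀ x y z u : X, dist x z * dist y u ≤ dist x y * dist z u + dist x u * dist y z)
    {c : ℝ → X} (hc : ∀ s t, dist (c s) (c t) = |s - t|) {p : X} {m r : ℝ}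
    (hp : dist p (c (m - r)) = dist p (c (m + r))) : dist p (c m) ≤ dist p (c (m + r)) := by
  have hzw : dist (c (m - r)) (c (m + r)) = 2 * |r| := by
    rw [hc, show m - r - (m + r) = -2 * r by ring, abs_mul]; norm_num
  refine dist_le_of_isMidpoint hpt (z := c (m - r)) ?_ ?_ hp
  · rw [hzw, hc, sub_sub_cancel_left, abs_neg]
  · rw [hzw, hc, sub_add_cancel_left, abs_neg]

/-- in a Ptolemy metric space, for Busemann parallel lines `ℓ, ℓ'` with
common Busemann function `b` admitting symmetries w.r.t. all horospheres, points
`x, y ∈ ℓ`, `x', y' ∈ ℓ'` at equal levels satisfy `d(x,y) = d(x',y')`,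
`d(x,x') = d(y,y')`, `d(x,y') = d(y,x')` and `d(x',y) ≥ d(x,x')`. -/
theorem equal_level_distances
    {X : Type*} [MetricSpace X]
    (hpt : ∀ x y z u : X,
      dist x z * dist y u ≤ dist x y * dist z u + dist x u * dist y z)
    (c c' : ℝ → X)
    (hc : ∀ s t : ℝ, dist (c s) (c t) = |s - t|)
    (hc' : ∀ s t : ℝ, dist (c' s) (c' t) = |s - t|)
    (b : X → ℝ)
    (hbc : ∀ t : ℝ, b (c t) = -t) (hbc' : ∀ t : ℝ, b (c' t) = -t)
    (hsym : ∀ β : ℝ, ∃ φ : X → X, Isometry φ ∧ φ ∘ φ = id ∧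
      (∀ p, b p = β → φ p = p) ∧ (∀ p, b (φ p) = 2 * β - b p) ∧
      φ '' Set.range c = Set.range c ∧ φ '' Set.range c' = Set.range c')
    (x y x' y' : X)
    (hx : x ∈ Set.range c) (hy : y ∈ Set.range c)
    (hx' : x' ∈ Set.range c') (hy' : y' ∈ Set.range c')
    (hbx : b x = b x') (hby : b y = b y') :
    dist x y = dist x' y' ∧ dist x x' = dist y y' ∧ dist x y' = dist y x' ∧
      dist x x' ≤ dist x' y := by
  obtain ⟨s, rfl⟩ := hx
  obtain ⟨t, rfl⟩ := hy
  obtain ⟨s', rfl⟩ := hx'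
  obtain ⟨t', rfl⟩ := hy'
  obtain rfl : s = s' := by linarith [hbc s, hbc' s']
  obtain rfl : t = t' := by linarith [hbc t, hbc' t']
  have hrefl {u v u' v' : ℝ} (h : u + v = u' + v') := dist_eq_of_add_eq hbc hbc'
    (fun β => (hsym β).imp fun _ hφ => ⟨hφ.1, hφ.2.2.2⟩) h
  have hcross : dist (c s) (c' t) = dist (c t) (c' s) := hrefl (add_comm s t)
  have hmid : dist (c s) (c' s) ≤ dist (c s) (c' (s + (t - s))) :=
    dist_le_of_dist_eq_reflect hpt hc' (hrefl (by ring))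
  rw [add_sub_cancel] at hmid
  exact ⟨by rw [hc, hc'], hrefl rfl, hcross, hmid.trans_eq (hcross.trans (dist_comm _ _))⟩
end

section
/- Let X be a Ptolemy metric space, b a Busemann function of a geodesic line, and x, x', y points with b(x) = b(x'), and let y'' be a point with d(x,y'') = d(x,y), d(x',y'') = d(x',y), and d(y,y'') = 2 d(x,y) (y'' is the reflection of y through the horosphere of x). Then d(x',y) ≥ d(x,x'). -/
theorem reflection_distance_lower_bound_general
    {X : Type*} [MetricSpace X]
    (hpt : ∀ a b c d : X,
      dist a c * dist b d ≤ dist a b * dist c d + dist a d * dist b c)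
    (b : X → ℝ) (x x' y y'' : X)
    (h1 : dist x y'' = dist x y)
    (h2 : dist x' y'' = dist x' y)
    (h3 : dist y y'' = 2 * dist x y) :
    dist x x' ≤ dist x' y := by
  rcases eq_or_ne x y with rfl | hxy
  · rw [dist_comm]
  have ptolemy : 2 * dist x y * dist x x' ≤ 2 * dist x y * dist x' y :=
    calc 2 * dist x y * dist x x' = dist y y'' * dist x x' := by rw [h3]
      _ ≤ dist y x * dist y'' x' + dist y x' * dist x y'' := hpt y x y'' x'
      _ = 2 * dist x y * dist x' y := by
        rw [dist_comm y'' x', h2, h1, dist_comm y x, dist_comm y x']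
        ring
  exact le_of_mul_le_mul_left ptolemy (by simpa using dist_pos.mpr hxy)

/-- in a Ptolemy metric space, if `b(x) = b(x')` for a Busemann function
`b` and `y''` is the reflection of `y` through the horosphere of `x` (so
`d(x,y'') = d(x,y)`, `d(x',y'') = d(x',y)`, `d(y,y'') = 2 d(x,y)`), then
`d(x',y) ≥ d(x,x')`. -/
theorem reflection_distance_lower_bound
    {X : Type*} [MetricSpace X]
    (hpt : ∀ a b c d : X,
      dist a c * dist b d ≤ dist a b * dist c d + dist a d * dist b c)
    (b : X → ℝ) (x x' y y'' : X)
    (hb : b x = b x')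
    (h1 : dist x y'' = dist x y)
    (h2 : dist x' y'' = dist x' y)
    (h3 : dist y y'' = 2 * dist x y) :
    dist x x' ≤ dist x' y :=
  reflection_distance_lower_bound_general hpt b x x' y y'' h1 h2 h3
end
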